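/- Let Σ be a real symmetric positive definite 2n×2n matrix and ħ > 0. Then the complex Hermitian matrix Σ + (iħ/2)J_n is positive semidefinite if and only if every complex eigenvalue of the matrix J_n·Σ has modulus ≥ ħ/2 (equivalently, all symplectic eigenvalues λ_{j,σ} of Σ, i.e. the positive λ such that ±iλ is an eigenvalue of J_n·Σ, satisfy λ_{j,σ} ≥ ħ/2). -/

import Mathlib

open Matrix
open scoped ComplexOrder

noncomputable section

/-- The phase space index type for `ℝ^{2m}`, split as positions ⊕ momenta. -/
abbrev PS (m : ℕ) := Fin m ⊕ Fin m

/-- The standard symplectic matrix `J_m = [[0, I_m], [-I_m, 0]]`. -/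
def symplJ (m : ℕ) : Matrix (PS m) (PS m) ℝ := Matrix.fromBlocks 0 1 (-1) 0

/-- The quantum condition `Σ + (ihbar/2) J_m ≥ 0`, i.e. the complex Hermitian matrix
`Σ + (ihbar/2) J_m` is positive semidefinite. -/
def QuantumCond (m : ℕ) (hbar : ℝ) (Sig : Matrix (PS m) (PS m) ℝ) : Prop :=
  (Sig.map Complex.ofReal + (hbar / 2 : ℝ) • Complex.I • (symplJ m).map Complex.ofReal).PosSemidef

/-- `μ ∈ ℂ` is an eigenvalue of the real matrix `N` (viewed as a complex matrix). -/
def IsEigenvalue {ι : Type} [Fintype ι] [DecidableEq ι] (N : Matrix ι ι ℝ) (μ : ℂ) : Prop :=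
  (N.map Complex.ofReal - μ • 1).det = 0

section Aux

lemma cmap_mul {ι : Type} [Fintype ι] [DecidableEq ι] (X Y : Matrix ι ι ℝ) :
    (X * Y).map (Complex.ofReal) = X.map Complex.ofReal * Y.map Complex.ofReal :=
  Matrix.map_mul (f := Complex.ofRealHom)

lemma cmap_det {ι : Type} [Fintype ι] [DecidableEq ι] (X : Matrix ι ι ℝ) :
    (X.map Complex.ofReal).det = Complex.ofReal X.det :=
  (RingHom.map_det Complex.ofRealHom X).symm

lemma cmap_conjT {ι : Type} [Fintype ι] (X : Matrix ι ι ℝ) :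
    (X.map Complex.ofReal)ᴴ = Xᵀ.map Complex.ofReal := by
  rw [← Matrix.conjTranspose_map]
  · ext i j; simp [Matrix.conjTranspose]
  · intro a; simp

lemma cmap_transp {ι : Type} [Fintype ι] (X : Matrix ι ι ℝ) :
    (X.map Complex.ofReal)ᵀ = Xᵀ.map Complex.ofReal := rfl

lemma symplJ_transpose (m : ℕ) : (symplJ m)ᵀ = -(symplJ m) := by
  simp [symplJ, Matrix.fromBlocks_transpose, Matrix.fromBlocks_neg]

lemma symplJ_sq (m : ℕ) : symplJ m * symplJ m = -1 := by
  have h1 : (-1 : Matrix (PS m) (PS m) ℝ) = -(Matrix.fromBlocks 1 0 0 1) := by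
    rw [Matrix.fromBlocks_one]
  simp only [symplJ, Matrix.fromBlocks_multiply, h1, Matrix.fromBlocks_neg]
  simp

end Aux

open scoped MatrixOrder

set_option maxHeartbeats 1000000 in
theorem statement0 (n : ℕ) (hbar : ℝ) (hhb : 0 < hbar)
    (Sig : Matrix (PS n) (PS n) ℝ) (hsym : Sig.IsSymm) (hpos : Sig.PosDef) :
    QuantumCond n hbar Sig ↔
      ∀ μ : ℂ, IsEigenvalue (symplJ n * Sig) μ → hbar / 2 ≤ ‖μ‖ := by
  classical
  set c : ℝ := hbar / 2 with hc
  have hc0 : 0 < c := by positivity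
  set A : Matrix (PS n) (PS n) ℂ := Sig.map Complex.ofReal with hA
  set B : Matrix (PS n) (PS n) ℂ := (symplJ n).map Complex.ofReal with hB
  -- basic facts about B
  have hBB : B * B = -1 := by
    rw [hB, ← cmap_mul, symplJ_sq]
    ext i j
    simp [Matrix.one_apply, apply_ite]
  have hBt : Bᵀ = -B := by
    rw [hB, cmap_transp, symplJ_transpose]
    ext i j; simp
  have hBh : Bᴴ = -B := by
    rw [hB, cmap_conjT, symplJ_transpose]
    ext i j; simp
  have hdetB : B.det ≠ 0 := by
    intro h
    have : B.det * B.det = (-1 : Matrix (PS n) (PS n) ℂ).det := by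
      rw [← Matrix.det_mul, hBB]
    rw [h, mul_zero] at this
    have h2 : ((-1 : Matrix (PS n) (PS n) ℂ)).det = 1 := by
      rw [show (-1 : Matrix (PS n) (PS n) ℂ) = (-1 : ℂ) • 1 by simp]
      rw [Matrix.det_smul, Matrix.det_one]
      simp [Fintype.card_sum]
    rw [h2] at this; exact one_ne_zero this.symm
  have hdetA : A.det ≠ 0 := by
    rw [hA, cmap_det]
    exact_mod_cast hpos.det_pos.ne'
  -- real square root
  have cmap_one : ((1 : Matrix (PS n) (PS n) ℝ)).map Complex.ofReal = 1 := by
    ext i j; simp [Matrix.one_apply, apply_ite]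
  set S0 : Matrix (PS n) (PS n) ℝ := CFC.sqrt Sig with hS0def
  have hS0S0 : S0 * S0 = Sig := CFC.sqrt_mul_sqrt_self Sig hpos.posSemidef.nonneg
  have hS0h : S0ᴴ = S0 := (CFC.sqrt_nonneg Sig).posSemidef.1
  have hS0t : S0ᵀ = S0 := by
    ext i j
    have := congrFun (congrFun hS0h i) j
    simpa [Matrix.conjTranspose_apply] using this
  have hdetS0 : S0.det ≠ 0 := by
    intro h
    have h2 : S0.det * S0.det = Sig.det := by rw [← Matrix.det_mul, hS0S0]
    rw [h, mul_zero] at h2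
    exact hpos.det_pos.ne' h2.symm
  set R0 : Matrix (PS n) (PS n) ℝ := S0⁻¹ with hR0def
  have hS0R0 : S0 * R0 = 1 := Matrix.mul_nonsing_inv _ (isUnit_iff_ne_zero.mpr hdetS0)
  have hR0S0 : R0 * S0 = 1 := Matrix.nonsing_inv_mul _ (isUnit_iff_ne_zero.mpr hdetS0)
  have hR0t : R0ᵀ = R0 := by rw [hR0def, Matrix.transpose_nonsing_inv, hS0t]
  set S : Matrix (PS n) (PS n) ℂ := S0.map Complex.ofReal with hSdef
  set R : Matrix (PS n) (PS n) ℂ := R0.map Complex.ofReal with hRdef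
  have hSS : S * S = A := by rw [hSdef, ← cmap_mul, hS0S0, hA]
  have hSR : S * R = 1 := by rw [hSdef, hRdef, ← cmap_mul, hS0R0, cmap_one]
  have hRS : R * S = 1 := by rw [hSdef, hRdef, ← cmap_mul, hR0S0, cmap_one]
  have hSh : Sᴴ = S := by rw [hSdef, cmap_conjT, hS0t]
  have hRh : Rᴴ = R := by rw [hRdef, cmap_conjT, hR0t]
  have hRt : Rᵀ = R := by rw [hRdef, cmap_transp, hR0t]
  have hdetR : R.det ≠ 0 := by
    intro h
    have h2 : R.det * S.det = 1 := by rw [← Matrix.det_mul, hRS, Matrix.det_one]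
    rw [h, zero_mul] at h2; exact one_ne_zero h2.symm
  have hRAR : R * A * R = 1 := by
    rw [← hSS]
    calc R * (S * S) * R = (R * S) * (S * R) := by
          simp only [Matrix.mul_assoc]
        _ = 1 := by rw [hRS, hSR, one_mul]
  -- K and H
  set K : Matrix (PS n) (PS n) ℂ := R * B * R with hKdef
  set H : Matrix (PS n) (PS n) ℂ := Complex.I • K with hHdef
  have hKh : Kᴴ = -K := by
    rw [hKdef, Matrix.conjTranspose_mul, Matrix.conjTranspose_mul, hRh, hBh]
    simp [Matrix.mul_assoc, Matrix.neg_mul, Matrix.mul_neg]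
  have hKt : Kᵀ = -K := by
    rw [hKdef, Matrix.transpose_mul, Matrix.transpose_mul, hRt, hBt]
    simp [Matrix.mul_assoc, Matrix.neg_mul, Matrix.mul_neg]
  have hHh : H.IsHermitian := by
    show Hᴴ = H
    rw [hHdef, Matrix.conjTranspose_smul, hKh]
    simp [Complex.star_def]
  have hHt : Hᵀ = -H := by
    rw [hHdef, Matrix.transpose_smul, hKt]
    simp
  -- eigenvalue characterizations via determinants
  have heig : ∀ μ : ℂ, IsEigenvalue (symplJ n * Sig) μ ↔ (A + μ • B).det = 0 := by
    intro μ
    have hrw : (symplJ n * Sig).map Complex.ofReal - μ • 1 = B * (A + μ • B) := by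
      rw [cmap_mul, ← hA, ← hB, Matrix.mul_add, Matrix.mul_smul, hBB, smul_neg]
      rw [sub_eq_add_neg]
    unfold IsEigenvalue
    rw [hrw, Matrix.det_mul, mul_eq_zero]
    exact ⟨fun h => h.resolve_left hdetB, fun h => Or.inr h⟩
  have hKeig : ∀ ν : ℂ, (K - ν • 1).det = 0 ↔ (B - ν • A).det = 0 := by
    intro ν
    have hrw : K - ν • 1 = R * (B - ν • A) * R := by
      calc K - ν • 1 = R * B * R - ν • (R * A * R) := by rw [hRAR, hKdef]
        _ = (R * B - ν • (R * A)) * R := by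
            rw [Matrix.sub_mul, Matrix.smul_mul]
        _ = R * (B - ν • A) * R := by rw [Matrix.mul_sub, Matrix.mul_smul]
    rw [hrw, Matrix.det_mul, Matrix.det_mul, mul_eq_zero, mul_eq_zero]
    constructor
    · rintro ((h | h) | h)
      · exact absurd h hdetR
      · exact h
      · exact absurd h hdetR
    · intro h; exact Or.inl (Or.inr h)
  have hIpow : (Complex.I) ^ Fintype.card (PS n) ≠ 0 := pow_ne_zero _ Complex.I_ne_zero
  have hHeig : ∀ τ : ℂ, (H - τ • 1).det = 0 ↔ (B - (-(Complex.I * τ)) • A).det = 0 := by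
    intro τ
    have hIt : Complex.I * -(Complex.I * τ) = τ := by
      rw [mul_neg, ← mul_assoc, Complex.I_mul_I]; ring
    have hrw : H - τ • 1 = Complex.I • (K - (-(Complex.I * τ)) • 1) := by
      rw [smul_sub, smul_smul, hIt, hHdef]
    rw [hrw, Matrix.det_smul, mul_eq_zero]
    constructor
    · intro h; exact (hKeig _).mp (h.resolve_left hIpow)
    · intro h; exact Or.inr ((hKeig _).mpr h)
  have hcard : Fintype.card (PS n) = n + n := by simp [Fintype.card_sum]
  have hHsymm : ∀ τ : ℂ, (H - τ • 1).det = (H + τ • 1).det := by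
    intro τ
    have h1 : H + τ • 1 = -(H - τ • 1)ᵀ := by
      rw [Matrix.transpose_sub, hHt, Matrix.transpose_smul, Matrix.transpose_one]
      abel
    rw [h1, Matrix.det_neg, Matrix.det_transpose, hcard]
    rw [Even.neg_one_pow (Even.add_self n), one_mul]
  -- spectral theorem for H
  set U : Matrix (PS n) (PS n) ℂ := (hHh.eigenvectorUnitary : Matrix (PS n) (PS n) ℂ) with hUdef
  set lam : PS n → ℝ := hHh.eigenvalues with hlamdef
  have hUU : U * star U = 1 := Matrix.mem_unitaryGroup_iff.mp hHh.eigenvectorUnitary.2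
  have hU'U : star U * U = 1 := Matrix.mem_unitaryGroup_iff'.mp hHh.eigenvectorUnitary.2
  have hspec : H = U * Matrix.diagonal (fun i => (lam i : ℂ)) * star U := hHh.spectral_theorem
  have hdiag : ∀ τ : ℂ, H - τ • 1 = U * Matrix.diagonal (fun i => (lam i : ℂ) - τ) * star U := by
    intro τ
    have h2 : τ • (1 : Matrix (PS n) (PS n) ℂ) = U * (τ • 1) * star U := by
      rw [Matrix.mul_smul, Matrix.mul_one, Matrix.smul_mul, hUU]
    conv_lhs => rw [hspec, h2]
    rw [← Matrix.sub_mul, ← Matrix.mul_sub]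
    have h3 : (τ • (1 : Matrix (PS n) (PS n) ℂ)) = Matrix.diagonal (fun _ => τ) := by
      ext i j
      by_cases h : i = j <;> simp [h, Matrix.one_apply, Matrix.diagonal_apply]
    rw [h3, Matrix.diagonal_sub]
  have hdetfac : ∀ τ : ℂ, (H - τ • 1).det = ∏ i, ((lam i : ℂ) - τ) := by
    intro τ
    rw [hdiag τ, Matrix.det_mul, Matrix.det_mul, Matrix.det_diagonal]
    have hUdet : U.det * (star U).det = 1 := by rw [← Matrix.det_mul, hUU, Matrix.det_one]
    rw [mul_comm U.det, mul_assoc, hUdet, mul_one]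
  -- the congruenced matrix G
  set G : Matrix (PS n) (PS n) ℂ := 1 + (c : ℂ) • H with hGdef
  have hGdiag : G = U * Matrix.diagonal (fun i => ((1 + c * lam i : ℝ) : ℂ)) * star U := by
    have h2 : (c : ℂ) • (U * Matrix.diagonal (fun i => (lam i : ℂ)) * star U)
        = U * ((c : ℂ) • Matrix.diagonal (fun i => (lam i : ℂ))) * star U := by
      rw [Matrix.mul_smul, Matrix.smul_mul]
    have h4 : (c : ℂ) • H = U * ((c : ℂ) • Matrix.diagonal (fun i => (lam i : ℂ))) * star U := by
      rw [hspec, h2]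
    have h3 : Matrix.diagonal (fun i => ((1 + c * lam i : ℝ) : ℂ))
        = 1 + (c : ℂ) • Matrix.diagonal (fun i => (lam i : ℂ)) := by
      ext i j
      by_cases h : i = j <;> simp [h, Matrix.one_apply, Matrix.diagonal_apply] <;> push_cast <;> ring
    rw [hGdef, h4, h3, Matrix.mul_add, Matrix.add_mul, Matrix.mul_one, hUU]
  have hsand : ∀ X : Matrix (PS n) (PS n) ℂ, star U * (U * X * star U) * U = X := by
    intro X
    calc star U * (U * X * star U) * U = (star U * U) * (X * (star U * U)) := by
          simp only [Matrix.mul_assoc]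
      _ = X := by rw [hU'U, Matrix.one_mul, Matrix.mul_one]
  have hGpos : G.PosSemidef ↔ ∀ i, 0 ≤ 1 + c * lam i := by
    constructor
    · intro hG i
      have hstar : (star U)ᴴ = U := by simp [Matrix.star_eq_conjTranspose]
      have h5 := hG.mul_mul_conjTranspose_same (star U)
      rw [hstar, hGdiag, hsand] at h5
      have h6 := Matrix.posSemidef_diagonal_iff.mp h5 i
      exact_mod_cast h6
    · intro hall
      have hD : (Matrix.diagonal (fun i => ((1 + c * lam i : ℝ) : ℂ))).PosSemidef :=
        Matrix.posSemidef_diagonal_iff.mpr (fun i => by exact_mod_cast hall i)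
      have h5 := hD.mul_mul_conjTranspose_same U
      rw [← Matrix.star_eq_conjTranspose] at h5
      rw [hGdiag]
      exact h5
  -- congruence: QuantumCond ↔ G PosSemidef
  have hsand2 : ∀ X : Matrix (PS n) (PS n) ℂ, S * (R * X * R) * S = X := by
    intro X
    calc S * (R * X * R) * S = (S * R) * (X * (R * S)) := by simp only [Matrix.mul_assoc]
      _ = X := by rw [hSR, hRS, Matrix.one_mul, Matrix.mul_one]
  have hMc : Sig.map Complex.ofReal + (hbar / 2 : ℝ) • Complex.I • (symplJ n).map Complex.ofReal
      = A + (c : ℂ) • (Complex.I • B) := by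
    rw [← hA, ← hB]
    congr 1
  have hRMcR : R * (A + (c : ℂ) • (Complex.I • B)) * R = G := by
    rw [Matrix.mul_add, Matrix.add_mul, hRAR, smul_smul, Matrix.mul_smul, Matrix.smul_mul,
      hGdef, hHdef, hKdef, smul_smul]
  have hQC : QuantumCond n hbar Sig ↔ G.PosSemidef := by
    unfold QuantumCond
    rw [hMc]
    constructor
    · intro h
      have h5 := h.mul_mul_conjTranspose_same R
      rw [hRh] at h5
      rwa [hRMcR] at h5
    · intro h
      have h5 := h.mul_mul_conjTranspose_same S
      rw [hSh] at h5
      rwa [← hRMcR, hsand2] at h5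
  -- final assembly
  rw [hQC, hGpos]
  constructor
  · -- quantum condition side → eigenvalue bound
    intro hall μ hμ
    rw [heig] at hμ
    have hμ0 : μ ≠ 0 := by
      rintro rfl
      rw [zero_smul, add_zero] at hμ
      exact hdetA hμ
    have hscal : (B - (-μ⁻¹) • A).det = 0 := by
      have h7 : B - (-μ⁻¹) • A = μ⁻¹ • (A + μ • B) := by
        rw [smul_add, smul_smul, inv_mul_cancel₀ hμ0, one_smul, neg_smul, sub_neg_eq_add,
          add_comm]
      rw [h7, Matrix.det_smul, hμ, mul_zero]
    set τ : ℂ := -(Complex.I * μ⁻¹) with hτ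
    have hτeig : (H - τ • 1).det = 0 := by
      rw [hHeig]
      have h8 : -(Complex.I * τ) = -μ⁻¹ := by
        rw [hτ, mul_neg, ← mul_assoc, Complex.I_mul_I]; ring
      rw [h8]; exact hscal
    rw [hdetfac] at hτeig
    obtain ⟨i, -, hi⟩ := Finset.prod_eq_zero_iff.mp hτeig
    have hiτ : (lam i : ℂ) = τ := sub_eq_zero.mp hi
    have habs : ‖μ‖ * |lam i| = 1 := by
      have h9 : |lam i| = ‖τ‖ := by rw [← hiτ, Complex.norm_real, Real.norm_eq_abs]
      rw [h9, hτ]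
      rw [show ‖(-(Complex.I * μ⁻¹))‖ = ‖(Complex.I * μ⁻¹)‖ by
        simp]
      rw [norm_mul, Complex.norm_I, one_mul, norm_inv]
      rw [mul_inv_cancel₀ (by simpa using hμ0)]
    have hneg : ∃ j, lam j = -lam i := by
      have h10 : (H - (-(lam i : ℝ) : ℂ) • 1).det = 0 := by
        have h11 : (H - ((lam i : ℝ) : ℂ) • 1).det = 0 := by
          rw [hdetfac]
          exact Finset.prod_eq_zero (Finset.mem_univ i) (by simp)
        have h12 : (H - (-(lam i : ℝ) : ℂ) • 1) = H + ((lam i : ℝ) : ℂ) • 1 := by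
          push_cast
          rw [neg_smul, sub_neg_eq_add]
        rw [h12, ← hHsymm]
        exact h11
      rw [hdetfac] at h10
      obtain ⟨j, -, hj⟩ := Finset.prod_eq_zero_iff.mp h10
      have := sub_eq_zero.mp hj
      exact ⟨j, by exact_mod_cast this⟩
    obtain ⟨j, hj⟩ := hneg
    have h13 := hall i
    have h14 := hall j
    rw [hj] at h14
    have h15 : c * |lam i| ≤ 1 := by
      rcases abs_cases (lam i) with ⟨h, -⟩ | ⟨h, -⟩ <;> rw [h] <;> nlinarith
    have hl0 : 0 < |lam i| := by
      rcases (abs_nonneg (lam i)).lt_or_eq with h | h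
      · exact h
      · exfalso; rw [← h, mul_zero] at habs; exact zero_ne_one habs
    exact le_of_mul_le_mul_right (by linarith) hl0
  · -- eigenvalue bound side → quantum condition
    intro hall i
    have hlam0 : lam i ≠ 0 := by
      intro h0
      have h16 : (H - (0 : ℂ) • 1).det ≠ 0 := by
        intro hcon
        have h16' := (hHeig 0).mp hcon
        simp only [mul_zero, neg_zero, zero_smul, sub_zero] at h16'
        exact hdetB h16'
      rw [hdetfac] at h16
      exact h16 (Finset.prod_eq_zero (Finset.mem_univ i) (by simp [h0]))
    set μ : ℂ := (Complex.I * (lam i : ℂ))⁻¹ with hμdef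
    have hμ0 : μ ≠ 0 := by
      rw [hμdef]
      simp [Complex.I_ne_zero, hlam0]
    have hμinv : -μ⁻¹ = -(Complex.I * ((lam i : ℝ) : ℂ)) := by rw [hμdef, inv_inv]
    have hBν : (B - (-μ⁻¹) • A).det = 0 := by
      rw [hμinv, ← hHeig]
      rw [hdetfac]
      exact Finset.prod_eq_zero (Finset.mem_univ i) (by simp)
    have hAμ : (A + μ • B).det = 0 := by
      have h17 : A + μ • B = μ • (B - (-μ⁻¹) • A) := by
        rw [smul_sub, smul_smul, mul_neg, mul_inv_cancel₀ hμ0, neg_smul, one_smul,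
          sub_neg_eq_add, add_comm]
      rw [h17, Matrix.det_smul, hBν, mul_zero]
    have h18 := hall μ ((heig μ).mpr hAμ)
    have habsμ : ‖μ‖ = |lam i|⁻¹ := by
      rw [hμdef, norm_inv, norm_mul, Complex.norm_I, one_mul, Complex.norm_real, Real.norm_eq_abs]
    rw [habsμ] at h18
    have hl0 : 0 < |lam i| := abs_pos.mpr hlam0
    have h19 : c * |lam i| ≤ 1 := by
      have := mul_le_mul_of_nonneg_right h18 (abs_nonneg (lam i))
      rwa [inv_mul_cancel₀ hl0.ne'] at this
    rcases abs_cases (lam i) with ⟨h, -⟩ | ⟨h, -⟩ <;> nlinarith
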